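/- Concrete fractional extreme point (instance verifying Lemma 1): the point (z*, v*) with z*_i = 1/2 for all i ∈ Fin 6 and v* = 0 belongs to the polyhedron Q₀ and is an extreme point of Q₀ (in the sense of Set.extremePoints over ℝ), and it is not integral. -/

import Mathlib

/-!
All slack variables `v` are nonnegative on `Q₀`, so the total slack `∑ v` is a linear functional
whose minimum `0` is attained where `v = 0`. There every pair constraint becomes an equality
`zᵢ + zⱼ = 1`, and these equalities force `z = 1/2`. Hence the half point is the unique minimiser
of the total slack over `Q₀`: an exposed point, and therefore an extreme point.
-/

/-- The polyhedron `Q₀ ⊆ ℝ⁶ × ℝ⁹` from the proof of Lemma 1: the LP relaxation of the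
reduced matching formulation for the instance with `T = 3`, `L = 6`, `P = 3`, three
categories per covariate, covariate values `x₁ = (1,1,1)`, `x₂ = (3,3,3)`,
`x₃ = (1,2,3)`, `x₄ = (3,2,1)`, `x₅ = (2,1,2)`, `x₆ = (2,3,2)`, and `N p k = 1` for
all `p, k`. -/
def Q₀ : Set ((Fin 6 → ℝ) × (Fin 3 → Fin 3 → ℝ)) :=
  {zv |
    |zv.1 0 + zv.1 2 - 1| ≤ zv.2 0 0 ∧
    |zv.1 4 + zv.1 5 - 1| ≤ zv.2 0 1 ∧
    |zv.1 1 + zv.1 3 - 1| ≤ zv.2 0 2 ∧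
    |zv.1 0 + zv.1 4 - 1| ≤ zv.2 1 0 ∧
    |zv.1 2 + zv.1 3 - 1| ≤ zv.2 1 1 ∧
    |zv.1 1 + zv.1 5 - 1| ≤ zv.2 1 2 ∧
    |zv.1 0 + zv.1 3 - 1| ≤ zv.2 2 0 ∧
    |zv.1 4 + zv.1 5 - 1| ≤ zv.2 2 1 ∧
    |zv.1 1 + zv.1 2 - 1| ≤ zv.2 2 2 ∧
    zv.1 0 + zv.1 1 + zv.1 2 + zv.1 3 + zv.1 4 + zv.1 5 = 3 ∧
    ∀ i, 0 ≤ zv.1 i ∧ zv.1 i ≤ 1}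

/-- The point `(z*, v*)` with all `z`-coordinates equal to `1/2` and `v* = 0`. -/
noncomputable def halfPoint : (Fin 6 → ℝ) × (Fin 3 → Fin 3 → ℝ) :=
  ((fun _ => 1 / 2), (fun _ _ => 0))

theorem mem_exposedPoints_of_nonneg_of_eq_zero {𝕜 E : Type*} [TopologicalSpace 𝕜] [Ring 𝕜]
    [PartialOrder 𝕜] [IsOrderedRing 𝕜] [IsTopologicalAddGroup 𝕜] [AddCommGroup E]
    [TopologicalSpace E] [Module 𝕜 E]
    {A : Set E} {x : E} (l : StrongDual 𝕜 E) (hx : x ∈ A) (hlx : l x = 0)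
    (hl_nonneg : ∀ y ∈ A, 0 ≤ l y) (hl_eq_zero : ∀ y ∈ A, l y = 0 → y = x) :
    x ∈ A.exposedPoints 𝕜 := by
  refine ⟨hx, -l, fun y hy => ⟨?_, fun hle => hl_eq_zero y hy ?_⟩⟩
  · simpa [hlx] using hl_nonneg y hy
  · simp only [neg_apply, hlx, neg_zero, Left.nonneg_neg_iff] at hle
    exact le_antisymm hle (hl_nonneg y hy)

def totalSlack : StrongDual ℝ ((Fin 6 → ℝ) × (Fin 3 → Fin 3 → ℝ)) :=
  ∑ p, ∑ k, (ContinuousLinearMap.proj k ∘L ContinuousLinearMap.proj p) ∘L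
    ContinuousLinearMap.snd ℝ _ _

theorem totalSlack_apply (x : (Fin 6 → ℝ) × (Fin 3 → Fin 3 → ℝ)) :
    totalSlack x = ∑ p, ∑ k, x.2 p k := by
  simp [totalSlack]

theorem snd_nonneg_of_mem_Q₀ {x : (Fin 6 → ℝ) × (Fin 3 → Fin 3 → ℝ)} (hx : x ∈ Q₀)
    (p k : Fin 3) : 0 ≤ x.2 p k := by
  obtain ⟨h₀₀, h₀₁, h₀₂, h₁₀, h₁₁, h₁₂, h₂₀, h₂₁, h₂₂, -, -⟩ := hx
  fin_cases p <;> fin_cases k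
  exacts [(abs_nonneg _).trans h₀₀, (abs_nonneg _).trans h₀₁, (abs_nonneg _).trans h₀₂,
    (abs_nonneg _).trans h₁₀, (abs_nonneg _).trans h₁₁, (abs_nonneg _).trans h₁₂,
    (abs_nonneg _).trans h₂₀, (abs_nonneg _).trans h₂₁, (abs_nonneg _).trans h₂₂]

theorem eq_halfPoint_of_mem_Q₀ {x : (Fin 6 → ℝ) × (Fin 3 → Fin 3 → ℝ)} (hx : x ∈ Q₀)
    (hv : ∀ p k, x.2 p k = 0) : x = halfPoint := by
  obtain ⟨h₀₀, h₀₁, h₀₂, h₁₀, h₁₁, h₁₂, h₂₀, -, h₂₂, -, -⟩ := hx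
  simp only [hv, abs_nonpos_iff, sub_eq_zero] at h₀₀ h₀₁ h₀₂ h₁₀ h₁₁ h₁₂ h₂₀ h₂₂
  -- `z₃ = z₄` since both complement `z₁`, and `z₃ + z₄ = 1`; the other pairs propagate `1/2`.
  ext i
  · fin_cases i <;> simp only [Fin.zero_eta, Fin.mk_one, Fin.reduceFinMk, halfPoint] <;> linarith
  · simp [halfPoint, hv]

theorem halfPoint_mem_Q₀ : halfPoint ∈ Q₀ := by
  refine ⟨?_, ?_, ?_, ?_, ?_, ?_, ?_, ?_, ?_, ?_, fun i => ?_⟩ <;> norm_num [halfPoint]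

theorem halfPoint_mem_exposedPoints_Q₀ : halfPoint ∈ Q₀.exposedPoints ℝ := by
  have hrow_nonneg {y} (hy : y ∈ Q₀) (p : Fin 3) : 0 ≤ ∑ k, y.2 p k :=
    Finset.sum_nonneg fun k _ => snd_nonneg_of_mem_Q₀ hy p k
  refine mem_exposedPoints_of_nonneg_of_eq_zero totalSlack halfPoint_mem_Q₀
    (by simp [totalSlack_apply, halfPoint])
    (fun y hy => (totalSlack_apply y).symm ▸ Finset.sum_nonneg fun p _ => hrow_nonneg hy p)
    fun y hy hsum => eq_halfPoint_of_mem_Q₀ hy fun p k => ?_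
  rw [totalSlack_apply, Fintype.sum_eq_zero_iff_of_nonneg (hrow_nonneg hy)] at hsum
  have hrow := (Fintype.sum_eq_zero_iff_of_nonneg (snd_nonneg_of_mem_Q₀ hy p)).1 (congrFun hsum p)
  exact congrFun hrow k

theorem one_half_ne_intCast (n : ℤ) : (1 / 2 : ℝ) ≠ n := by
  intro h
  have : 2 * n = 1 := by exact_mod_cast (by linarith : (2 : ℝ) * n = 1)
  omega

/-- The point with all `z`-coordinates equal to `1/2` and `v = 0` belongs to `Q₀`, is
an extreme point of `Q₀`, and is not integral. -/
theorem half_point_is_fractional_extreme_point :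
    halfPoint ∈ Q₀ ∧
    halfPoint ∈ Set.extremePoints ℝ Q₀ ∧
    ¬((∀ i : Fin 6, ∃ n : ℤ, halfPoint.1 i = (n : ℝ)) ∧
      (∀ (p k : Fin 3), ∃ n : ℤ, halfPoint.2 p k = (n : ℝ))) := by
  refine ⟨halfPoint_mem_Q₀, exposedPoints_subset_extremePoints halfPoint_mem_exposedPoints_Q₀, ?_⟩
  rintro ⟨hz, -⟩
  obtain ⟨n, hn⟩ := hz 0
  exact one_half_ne_intCast n hn
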